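/- Let C be the lazy random walk on the cycle ℤ_n (transition probabilities C(x,x) = 1/2, C(x, x+1 mod n) = C(x, x−1 mod n) = 1/4), whose stationary distribution is uniform. For 1 ≤ i ≤ n/2 with 2i dividing n, let f_i : ℤ_n → {0,1} be defined by f_i(x) = 0 if and only if (x mod 2i) < i. Then E_π[f_i] = 1/2, Var_π[f_i] = 1/4, and there is a universal constant c > 0 such that for all trace lengths T, the trace variance satisfies v_T(f_i) ≤ c·i²/T. -/

import Mathlib

open Finset
open scoped BigOperators Classical

section MarkovDefs

variable {Ω : Type*} [Fintype Ω] [DecidableEq Ω]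

/-- `M` is a (row-)stochastic matrix: the transition matrix of a Markov chain. -/
def IsStochastic (M : Matrix Ω Ω ℝ) : Prop :=
  (∀ x y, 0 ≤ M x y) ∧ ∀ x, ∑ y, M x y = 1

/-- `p` is a probability distribution on `Ω`. -/
def IsProbDist (p : Ω → ℝ) : Prop :=
  (∀ x, 0 ≤ p x) ∧ ∑ x, p x = 1

/-- `p` is a stationary distribution of the chain `M`. -/
def IsStationaryDist (M : Matrix Ω Ω ℝ) (p : Ω → ℝ) : Prop :=
  IsProbDist p ∧ ∀ y, ∑ x, p x * M x y = p y

/-- Ergodicity (irreducibility and aperiodicity, i.e. primitivity):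
some power of `M` is entrywise positive. -/
def IsErgodic (M : Matrix Ω Ω ℝ) : Prop :=
  ∃ k : ℕ, ∀ x y, 0 < (M ^ k) x y

/-- The chain is lazy: each self-loop probability is at least `1/2`. -/
def IsLazy (M : Matrix Ω Ω ℝ) : Prop :=
  ∀ x, (1 : ℝ) / 2 ≤ M x x

/-- Reversibility (detailed balance) of `M` with respect to `p`. -/
def IsReversible (M : Matrix Ω Ω ℝ) (p : Ω → ℝ) : Prop :=
  ∀ x y, p x * M x y = p y * M y x

/-- Mean of `f` under the distribution `p`. -/
noncomputable def stMean (p : Ω → ℝ) (f : Ω → ℝ) : ℝ := ∑ x, p x * f x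

/-- Variance of `f` under the distribution `p`. -/
noncomputable def stVar (p : Ω → ℝ) (f : Ω → ℝ) : ℝ :=
  ∑ x, p x * (f x - stMean p f) ^ 2

/-- Probability that a stationary trace of length `T` of the chain `M`
(started in `p`) equals `x`. -/
noncomputable def traceProb (M : Matrix Ω Ω ℝ) (p : Ω → ℝ) (T : ℕ) (x : Fin T → Ω) : ℝ :=
  (if h : 0 < T then p (x ⟨0, h⟩) else 1) *
    ∏ i : Fin T, if h : (i : ℕ) + 1 < T then M (x i) (x ⟨(i : ℕ) + 1, h⟩) else 1

/-- Expectation of a functional `F` of a stationary length-`T` trace of `M`. -/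
noncomputable def traceExp (M : Matrix Ω Ω ℝ) (p : Ω → ℝ) (T : ℕ)
    (F : (Fin T → Ω) → ℝ) : ℝ :=
  ∑ x : Fin T → Ω, traceProb M p T x * F x

/-- The trace variance `v_T`: the variance of the trace average
`(1/T) ∑ᵢ f(Xᵢ)` along a stationary length-`T` trace of `M`. -/
noncomputable def traceVar (M : Matrix Ω Ω ℝ) (p : Ω → ℝ) (f : Ω → ℝ) (T : ℕ) : ℝ :=
  traceExp M p T fun x => ((∑ i, f (x i)) / (T : ℝ) - stMean p f) ^ 2

/-- Stationary autocovariance of `f` at lag `i`: `Cov(f(X₁), f(X_{1+i}))`. -/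
noncomputable def autocov (M : Matrix Ω Ω ℝ) (p : Ω → ℝ) (f : Ω → ℝ) (i : ℕ) : ℝ :=
  ∑ x, ∑ y, p x * (M ^ i) x y * (f x - stMean p f) * (f y - stMean p f)

/-- `μ` is a (real) eigenvalue of the matrix `M`. -/
def IsEigenvalue (M : Matrix Ω Ω ℝ) (μ : ℝ) : Prop :=
  ∃ v : Ω → ℝ, v ≠ 0 ∧ M.mulVec v = μ • v

/-- The second largest absolute eigenvalue of `M` :
the largest absolute value of an eigenvalue other than `1`. -/
noncomputable def secondEigenvalue (M : Matrix Ω Ω ℝ) : ℝ :=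
  sSup {s : ℝ | ∃ μ : ℝ, IsEigenvalue M μ ∧ μ ≠ 1 ∧ s = |μ|}

/-- Relaxation time `τ_rel = 1 / (1 - λ)`. -/
noncomputable def relaxTime (M : Matrix Ω Ω ℝ) : ℝ := 1 / (1 - secondEigenvalue M)

/-- Total variation distance between two distributions on `Ω`. -/
noncomputable def tvDist (p q : Ω → ℝ) : ℝ := (∑ x, |p x - q x|) / 2

/-- Mixing time: least `t` such that from every initial distribution the chain is
within total variation `1/4` of `p` after `t` steps. -/
noncomputable def mixingTime (M : Matrix Ω Ω ℝ) (p : Ω → ℝ) : ℕ :=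
  sInf {t : ℕ | ∀ ν : Ω → ℝ, IsProbDist ν →
    tvDist (fun y => ∑ x, ν x * (M ^ t) x y) p ≤ 1 / 4}

/-- The `T`-trace chain `M^{(T)}` for `T = n + 1`, on state space `Fin (n+1) → Ω`. -/
noncomputable def traceChain (M : Matrix Ω Ω ℝ) (n : ℕ) :
    Matrix (Fin (n + 1) → Ω) (Fin (n + 1) → Ω) ℝ :=
  fun a b => M (a (Fin.last n)) (b 0) * ∏ i : Fin n, M (b i.castSucc) (b i.succ)

end MarkovDefs

/-- The lazy random walk on the cycle `ℤ_n`: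
`C(x,x) = 1/2`, `C(x, x±1) = 1/4`. -/
noncomputable def cycleChain (n : ℕ) : Matrix (ZMod n) (ZMod n) ℝ :=
  fun x y =>
    (if y = x then (1 : ℝ) / 2 else 0) + (if y = x + 1 then (1 : ℝ) / 4 else 0) +
      (if y = x - 1 then (1 : ℝ) / 4 else 0)

/-- The function `f_i : ℤ_n → {0,1}`, `f_i x = 0` iff `(x mod 2i) < i`. -/
noncomputable def cycleF (n i : ℕ) (x : ZMod n) : ℝ :=
  if x.val % (2 * i) < i then 0 else 1

/-! Write `g = f_i - 1/2`. Then `g (x + i) = -g x`, and the lag-`t` autocovariance of `f_i` is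
`a t / n` with `a t = ⟪g, Cᵗ g⟫`. As `C` is symmetric, `a (2s) = ‖Cˢ g‖²` and
`a (2s+1) = ⟪Cˢ g, C Cˢ g⟫`; the Dirichlet-form identities of the lazy walk make `a` nonnegative
and nonincreasing. Antiperiodicity gives the Poincaré inequality `‖h‖² ≤ i² (‖h‖² - ⟪h, C h⟫)` for
every `h = Cˢ g`, so `a (2s) ≤ i² (a (2s) - a (2s+2))`, and telescoping bounds every partial sum of
the autocovariances by `i²/2`. Finally `v_T = T⁻² ∑_{j,k<T} Cov(f(X_j), f(X_k))`, and each row of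
this double sum is at most twice a partial sum of autocovariances, whence `v_T ≤ i² / T`. -/

open Matrix

theorem sum_range_dist_le {a : ℕ → ℝ} (ha : ∀ t, 0 ≤ a t) {B : ℝ}
    (hB : ∀ m, ∑ t ∈ range m, a t ≤ B) {j T : ℕ} (hj : j < T) :
    ∑ k ∈ range T, a (Nat.dist j k) ≤ 2 * B := by
  rw [← sum_range_add_sum_Ico _ hj, sum_Ico_eq_sum_range]
  have hleft : ∑ k ∈ range (j + 1), a (Nat.dist j k) = ∑ t ∈ range (j + 1), a t := by
    rw [← sum_range_reflect]
    refine sum_congr rfl fun k hk => ?_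
    rw [mem_range] at hk
    rw [Nat.dist_eq_sub_of_le_right (by omega)]
    congr 1
    omega
  have hright : ∑ t ∈ range (T - (j + 1)), a (Nat.dist j (j + 1 + t)) ≤
      ∑ t ∈ range (T - (j + 1) + 1), a t := by
    have hdist : ∀ t, Nat.dist j (j + 1 + t) = t + 1 := fun t => by
      rw [Nat.dist_eq_sub_of_le (by omega)]
      omega
    simp only [hdist, sum_range_succ' a]
    linarith [ha 0]
  linarith [hB (j + 1), hB (T - (j + 1) + 1)]

theorem sum_range_le_of_antitone {a : ℕ → ℝ} (ha : Antitone a) (h0 : ∀ t, 0 ≤ a t) {K : ℝ}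
    (hK : 0 ≤ K) (hstep : ∀ s, a (2 * s) ≤ K * (a (2 * s) - a (2 * s + 1))) (m : ℕ) :
    ∑ t ∈ range m, a t ≤ 2 * K * a 0 := by
  have hpairs : ∀ k, ∑ t ∈ range (2 * k), a t + 2 * K * a (2 * k) ≤ 2 * K * a 0 := by
    intro k
    induction k with
    | zero => simp
    | succ k ih =>
      have h1 : a (2 * k + 1) ≤ a (2 * k) := ha (by omega)
      have h2 : K * a (2 * k + 1 + 1) ≤ K * a (2 * k + 1) :=
        mul_le_mul_of_nonneg_left (ha (by omega)) hK
      rw [show 2 * (k + 1) = 2 * k + 1 + 1 by ring, sum_range_succ, sum_range_succ]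
      linarith [hstep k]
  calc ∑ t ∈ range m, a t ≤ ∑ t ∈ range (2 * m), a t :=
        sum_le_sum_of_subset_of_nonneg (range_subset_range.mpr (by omega)) fun t _ _ => h0 t
    _ ≤ 2 * K * a 0 := by nlinarith [hpairs m, h0 (2 * m)]

theorem dotProduct_self_eq_sum_sq {ι : Type*} [Fintype ι] (v : ι → ℝ) : v ⬝ᵥ v = ∑ x, v x ^ 2 := by
  simp only [dotProduct, sq]

theorem traceProb_succ {Ω : Type*} (M : Matrix Ω Ω ℝ) (p : Ω → ℝ) (N : ℕ) (x : Fin (N + 1) → Ω) :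
    traceProb M p (N + 1) x = p (x 0) * ∏ i : Fin N, M (x i.castSucc) (x i.succ) := by
  rw [traceProb, dif_pos N.succ_pos, Fin.prod_univ_castSucc, Fin.val_last,
    dif_neg (lt_irrefl _), mul_one]
  exact congrArg _ (prod_congr rfl fun i _ => dif_pos (by simp))

section MarkovChain

variable {Ω : Type*} [Fintype Ω]

/-- `pathSum M N w u` is the expectation of `∏_{j ≤ N} w j (X_j)` for the chain `M` started at
`X_0 = u`. -/
noncomputable def pathSum (M : Matrix Ω Ω ℝ) : ℕ → (ℕ → Ω → ℝ) → Ω → ℝ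
  | 0, w => w 0
  | N + 1, w => w 0 * M *ᵥ pathSum M N (fun j => w (j + 1))

theorem sum_path_mul_prod (M : Matrix Ω Ω ℝ) (N : ℕ) (q : Ω → ℝ) (w : ℕ → Ω → ℝ) :
    ∑ x : Fin (N + 1) → Ω,
        q (x 0) * (∏ i : Fin N, M (x i.castSucc) (x i.succ)) * ∏ j : Fin (N + 1), w j (x j) =
      q ⬝ᵥ pathSum M N w := by
  induction N generalizing q w with
  | zero =>
    rw [← (Equiv.funUnique (Fin 1) Ω).symm.sum_comp]
    simp [pathSum, dotProduct]
  | succ N ih =>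
    rw [← (Fin.consEquiv fun _ => Ω).sum_comp, Fintype.sum_prod_type]
    refine sum_congr rfl fun u _ => ?_
    have hcons : ∀ y : Fin (N + 1) → Ω,
        let x : Fin (N + 2) → Ω := Fin.cons u y
        q (x 0) * (∏ i : Fin (N + 1), M (x i.castSucc) (x i.succ)) * ∏ j : Fin (N + 2), w j (x j) =
          q u * w 0 u * (M u (y 0) * (∏ i : Fin N, M (y i.castSucc) (y i.succ)) *
            ∏ j : Fin (N + 1), w (j + 1) (y j)) := by
      intro y x
      rw [Fin.prod_univ_succ, Fin.prod_univ_succ]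
      simp only [x, Fin.castSucc_zero, Fin.cons_zero, Fin.cons_succ, ← Fin.succ_castSucc,
        Fin.val_zero, Fin.val_succ]
      ring
    refine (sum_congr rfl fun y _ => hcons y).trans ?_
    have hrest := ih (fun v => M u v) fun j => w (j + 1)
    rw [← mul_sum, hrest]
    simp only [pathSum, dotProduct, mulVec, Pi.mul_apply]
    ring

theorem traceExp_sum (M : Matrix Ω Ω ℝ) (p : Ω → ℝ) (T : ℕ) {ι : Type*} (s : Finset ι)
    (F : ι → (Fin T → Ω) → ℝ) :
    traceExp M p T (fun x => ∑ i ∈ s, F i x) = ∑ i ∈ s, traceExp M p T (F i) := by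
  simp only [traceExp, mul_sum]
  exact sum_comm

theorem traceExp_div_const (M : Matrix Ω Ω ℝ) (p : Ω → ℝ) (T : ℕ) (F : (Fin T → Ω) → ℝ)
    (c : ℝ) : traceExp M p T (fun x => F x / c) = traceExp M p T F / c := by
  simp only [traceExp, sum_div, mul_div_assoc]

variable [DecidableEq Ω]

theorem pathSum_pair {M : Matrix Ω Ω ℝ} (hM : M *ᵥ 1 = 1) (g h : Ω → ℝ) {N d e : ℕ}
    (hde : d ≤ e) (heN : e ≤ N) :
    pathSum M N (fun j => (if j = d then g else 1) * (if j = e then h else 1)) =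
      M ^ d *ᵥ (g * M ^ (e - d) *ᵥ h) := by
  induction N generalizing d e g h with
  | zero =>
    obtain ⟨rfl, rfl⟩ : d = 0 ∧ e = 0 := by omega
    simp [pathSum]
  | succ N ih =>
    rcases d with _ | d <;> rcases e with _ | e
    · have hrest := ih 1 1 le_rfl (Nat.zero_le N)
      simp only [ite_self, mul_one, pow_zero, one_mulVec] at hrest
      simp [pathSum, hrest, hM]
    · have hrest := ih 1 h (Nat.zero_le e) (by omega)
      simp only [ite_self, one_mul, pow_zero, one_mulVec, Nat.sub_zero] at hrest
      simp [pathSum, hrest, pow_succ', ← mulVec_mulVec]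
    · omega
    · have hrest := ih g h (by omega : d ≤ e) (by omega)
      simp only [pathSum, Nat.add_right_cancel_iff, hrest, Nat.add_sub_add_right, pow_succ',
        ← mulVec_mulVec]
      simp

theorem vecMul_pow_eq_self {M : Matrix Ω Ω ℝ} {p : Ω → ℝ} (hp : p ᵥ* M = p) (k : ℕ) :
    p ᵥ* M ^ k = p := by
  induction k with
  | zero => simp
  | succ k ih => rw [pow_succ, ← vecMul_vecMul, ih, hp]

theorem traceExp_mul_eq_dotProduct {M : Matrix Ω Ω ℝ} {p : Ω → ℝ} (hM : M *ᵥ 1 = 1)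
    (hp : p ᵥ* M = p) {N : ℕ} (g h : Ω → ℝ) {j k : Fin (N + 1)} (hjk : j ≤ k) :
    traceExp M p (N + 1) (fun x => g (x j) * h (x k)) = p ⬝ᵥ (g * M ^ (k - j : ℕ) *ᵥ h) := by
  set w : ℕ → Ω → ℝ := fun m => (if m = j then g else 1) * (if m = k then h else 1)
  have hprod : ∀ x : Fin (N + 1) → Ω, g (x j) * h (x k) = ∏ m : Fin (N + 1), w m (x m) := by
    intro x
    simp only [w, Pi.mul_apply, prod_mul_distrib, Fin.val_eq_val, ite_apply, Pi.one_apply,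
      Fintype.prod_ite_eq']
  simp only [traceExp, traceProb_succ, hprod]
  rw [sum_path_mul_prod, pathSum_pair hM g h (Fin.le_iff_val_le_val.mp hjk) (by omega),
    dotProduct_mulVec, vecMul_pow_eq_self hp]

theorem autocov_eq_dotProduct (M : Matrix Ω Ω ℝ) (p f : Ω → ℝ) (t : ℕ) :
    autocov M p f t =
      p ⬝ᵥ ((fun x => f x - stMean p f) * M ^ t *ᵥ fun x => f x - stMean p f) := by
  simp only [autocov, dotProduct, mulVec, Pi.mul_apply, mul_sum]
  exact sum_congr rfl fun x _ => sum_congr rfl fun y _ => by ring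

theorem traceExp_centered_mul_eq_autocov {M : Matrix Ω Ω ℝ} {p : Ω → ℝ} (hM : M *ᵥ 1 = 1)
    (hp : p ᵥ* M = p) (f : Ω → ℝ) {N : ℕ} (j k : Fin (N + 1)) :
    traceExp M p (N + 1) (fun x => (f (x j) - stMean p f) * (f (x k) - stMean p f)) =
      autocov M p f (Nat.dist j k) := by
  set g : Ω → ℝ := fun x => f x - stMean p f
  rw [autocov_eq_dotProduct]
  rcases le_total j k with hjk | hkj
  · rw [Nat.dist_eq_sub_of_le hjk]
    exact traceExp_mul_eq_dotProduct hM hp g g hjk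
  · rw [Nat.dist_eq_sub_of_le_right hkj, ← traceExp_mul_eq_dotProduct hM hp g g hkj]
    exact congrArg _ (funext fun x => mul_comm _ _)

theorem traceVar_succ_eq {M : Matrix Ω Ω ℝ} {p : Ω → ℝ} (hM : M *ᵥ 1 = 1) (hp : p ᵥ* M = p)
    (f : Ω → ℝ) (N : ℕ) :
    traceVar M p f (N + 1) =
      (∑ j : Fin (N + 1), ∑ k : Fin (N + 1), autocov M p f (Nat.dist j k)) / (N + 1 : ℝ) ^ 2 := by
  have hsq : ∀ x : Fin (N + 1) → Ω, ((∑ i, f (x i)) / ((N + 1 : ℕ) : ℝ) - stMean p f) ^ 2 =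
      (∑ j, ∑ k, (f (x j) - stMean p f) * (f (x k) - stMean p f)) / (N + 1 : ℝ) ^ 2 := by
    intro x
    rw [← sum_mul_sum, ← sq, sum_sub_distrib, sum_const, card_univ, Fintype.card_fin]
    field_simp
    push_cast
    ring
  simp only [traceVar, hsq, traceExp_div_const, traceExp_sum,
    traceExp_centered_mul_eq_autocov hM hp]

theorem traceVar_le_of_autocov {M : Matrix Ω Ω ℝ} {p : Ω → ℝ} (hM : M *ᵥ 1 = 1)
    (hp : p ᵥ* M = p) {f : Ω → ℝ} (hnonneg : ∀ t, 0 ≤ autocov M p f t) {B : ℝ}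
    (hB : ∀ m, ∑ t ∈ range m, autocov M p f t ≤ B) {T : ℕ} (hT : 0 < T) :
    traceVar M p f T ≤ 2 * B / T := by
  obtain ⟨N, rfl⟩ := Nat.exists_eq_add_one_of_ne_zero hT.ne'
  have hrows : ∑ j : Fin (N + 1), ∑ k : Fin (N + 1), autocov M p f (Nat.dist j k) ≤
      (N + 1) * (2 * B) := by
    calc _ ≤ ∑ _j : Fin (N + 1), 2 * B := sum_le_sum fun j _ => by
          rw [Fin.sum_univ_eq_sum_range (fun k => autocov M p f (Nat.dist j k))]
          exact sum_range_dist_le hnonneg hB j.isLt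
      _ = (N + 1) * (2 * B) := by simp
  rw [traceVar_succ_eq hM hp, Nat.cast_add_one]
  calc _ ≤ (N + 1) * (2 * B) / (N + 1 : ℝ) ^ 2 := by gcongr
    _ = 2 * B / (N + 1) := by field_simp

end MarkovChain

section SymmetricMatrix

variable {Ω : Type*} [Fintype Ω] [DecidableEq Ω] {A : Matrix Ω Ω ℝ}

theorem dotProduct_pow_add_mulVec (hA : Aᵀ = A) (v w : Ω → ℝ) (s t : ℕ) :
    v ⬝ᵥ A ^ (s + t) *ᵥ w = (A ^ s *ᵥ v) ⬝ᵥ (A ^ t *ᵥ w) := by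
  rw [pow_add, ← mulVec_mulVec, dotProduct_mulVec, ← mulVec_transpose, transpose_pow, hA]

theorem dotProduct_pow_two_mul_mulVec (hA : Aᵀ = A) (g : Ω → ℝ) (s : ℕ) :
    g ⬝ᵥ A ^ (2 * s) *ᵥ g = (A ^ s *ᵥ g) ⬝ᵥ (A ^ s *ᵥ g) := by
  rw [two_mul, dotProduct_pow_add_mulVec hA]

theorem dotProduct_pow_two_mul_add_one_mulVec (hA : Aᵀ = A) (g : Ω → ℝ) (s : ℕ) :
    g ⬝ᵥ A ^ (2 * s + 1) *ᵥ g = (A ^ s *ᵥ g) ⬝ᵥ A *ᵥ (A ^ s *ᵥ g) := by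
  rw [two_mul, add_assoc, dotProduct_pow_add_mulVec hA, pow_succ', ← mulVec_mulVec]

theorem dotProduct_pow_mulVec_nonneg (hA : Aᵀ = A) (hpos : ∀ v, 0 ≤ v ⬝ᵥ A *ᵥ v)
    (g : Ω → ℝ) (t : ℕ) : 0 ≤ g ⬝ᵥ A ^ t *ᵥ g := by
  obtain ⟨s, rfl | rfl⟩ := Nat.even_or_odd' t
  · rw [dotProduct_pow_two_mul_mulVec hA]
    exact sum_nonneg fun x _ => mul_self_nonneg _
  · rw [dotProduct_pow_two_mul_add_one_mulVec hA]
    exact hpos _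

theorem antitone_dotProduct_pow_mulVec (hA : Aᵀ = A) (hle : ∀ v, v ⬝ᵥ A *ᵥ v ≤ v ⬝ᵥ v)
    (hsq : ∀ v, (A *ᵥ v) ⬝ᵥ (A *ᵥ v) ≤ v ⬝ᵥ A *ᵥ v) (g : Ω → ℝ) :
    Antitone fun t => g ⬝ᵥ A ^ t *ᵥ g := by
  refine antitone_nat_of_succ_le fun t => ?_
  obtain ⟨s, rfl | rfl⟩ := Nat.even_or_odd' t
  · rw [dotProduct_pow_two_mul_add_one_mulVec hA, dotProduct_pow_two_mul_mulVec hA]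
    exact hle _
  · rw [show 2 * s + 1 + 1 = 2 * (s + 1) by ring, dotProduct_pow_two_mul_mulVec hA,
      dotProduct_pow_two_mul_add_one_mulVec hA, pow_succ', ← mulVec_mulVec]
    exact hsq _

end SymmetricMatrix

section Translation

variable {G : Type*} [AddCommGroup G] [Fintype G]

theorem sum_comp_add_right (F : G → ℝ) (a : G) : ∑ x, F (x + a) = ∑ x, F x :=
  Equiv.sum_comp (Equiv.addRight a) F

theorem sum_sq_sub_comp_add (g : G → ℝ) (a : G) :
    ∑ x, (g x - g (x + a)) ^ 2 = 2 * ∑ x, g x ^ 2 - 2 * ∑ x, g x * g (x + a) := by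
  have := sum_comp_add_right (fun x => g x ^ 2) a
  simp only [sub_sq, sum_add_distrib, sum_sub_distrib, mul_assoc, ← mul_sum] at this ⊢
  linarith

theorem sum_sq_add_comp_add (g : G → ℝ) (a : G) :
    ∑ x, (g x + g (x + a)) ^ 2 = 2 * ∑ x, g x ^ 2 + 2 * ∑ x, g x * g (x + a) := by
  have := sum_comp_add_right (fun x => g x ^ 2) a
  simp only [add_sq, sum_add_distrib, mul_assoc, ← mul_sum] at this ⊢
  linarith

theorem sum_mul_comp_sub (g : G → ℝ) (a : G) :
    ∑ x, g x * g (x - a) = ∑ x, g x * g (x + a) := by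
  rw [← sum_comp_add_right _ a]
  simp only [add_sub_cancel_right, mul_comm]

theorem Function.Antiperiodic.sum_eq_zero {g : G → ℝ} {a : G} (hg : Function.Antiperiodic g a) :
    ∑ x, g x = 0 := by
  have := sum_comp_add_right g a
  simp only [hg _, sum_neg_distrib] at this
  linarith

theorem Function.Antiperiodic.sum_sq_le (g : G → ℝ) (a : G) {i : ℕ}
    (hg : Function.Antiperiodic g (i • a)) :
    ∑ x, g x ^ 2 ≤ (i : ℝ) ^ 2 / 4 * ∑ x, (g x - g (x + a)) ^ 2 := by
  set step : G → ℕ → ℝ := fun x j => g (x + j • a) - g (x + (j + 1) • a)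
  have hpoint : ∀ x, 4 * g x ^ 2 ≤ i * ∑ j ∈ range i, step x j ^ 2 := by
    intro x
    have htel : ∑ j ∈ range i, step x j = 2 * g x := by
      rw [sum_range_sub' (fun j => g (x + j • a)), zero_smul, add_zero, hg]
      ring
    have := sq_sum_le_card_mul_sum_sq (s := range i) (f := step x)
    rw [htel, card_range] at this
    linarith
  have hshift : ∀ j : ℕ, ∑ x, step x j ^ 2 = ∑ x, (g x - g (x + a)) ^ 2 := fun j => by
    simp only [step, succ_nsmul, ← add_assoc]
    exact sum_comp_add_right (fun x => (g x - g (x + a)) ^ 2) (j • a)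
  have := sum_le_sum fun x (_ : x ∈ univ) => hpoint x
  rw [← mul_sum, ← mul_sum, sum_comm] at this
  simp only [hshift, sum_const, card_range, nsmul_eq_mul] at this
  nlinarith

end Translation

section CycleChain

variable {n : ℕ}

theorem cycleChain_transpose : (cycleChain n)ᵀ = cycleChain n := by
  ext x y
  simp only [transpose_apply, cycleChain, eq_comm (a := x), eq_sub_iff_add_eq, ← sub_eq_iff_eq_add]
  ring

variable [NeZero n]

theorem cycleChain_mulVec_apply (g : ZMod n → ℝ) (x : ZMod n) :
    (cycleChain n *ᵥ g) x = g x / 2 + g (x + 1) / 4 + g (x - 1) / 4 := by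
  simp only [mulVec, dotProduct, cycleChain, add_mul, ite_mul, zero_mul, sum_add_distrib,
    sum_ite_eq', mem_univ, if_true]
  ring

theorem cycleChain_mulVec_const (c : ℝ) : cycleChain n *ᵥ (fun _ => c) = fun _ => c := by
  ext x
  rw [cycleChain_mulVec_apply]
  ring

theorem const_vecMul_cycleChain (c : ℝ) : (fun _ => c) ᵥ* cycleChain n = fun _ => c := by
  rw [← mulVec_transpose, cycleChain_transpose, cycleChain_mulVec_const]

theorem Function.Antiperiodic.cycleChain_mulVec {g : ZMod n → ℝ} {a : ZMod n}
    (hg : Function.Antiperiodic g a) : Function.Antiperiodic (cycleChain n *ᵥ g) a := by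
  intro x
  rw [cycleChain_mulVec_apply, cycleChain_mulVec_apply, add_right_comm x a, ← sub_add_eq_add_sub,
    hg, hg, hg]
  ring

theorem Function.Antiperiodic.cycleChain_pow_mulVec {g : ZMod n → ℝ} {a : ZMod n}
    (hg : Function.Antiperiodic g a) (s : ℕ) :
    Function.Antiperiodic (cycleChain n ^ s *ᵥ g) a := by
  induction s with
  | zero => simpa using hg
  | succ s ih => simpa [pow_succ', ← mulVec_mulVec] using ih.cycleChain_mulVec

variable (g : ZMod n → ℝ)

theorem dotProduct_cycleChain_mulVec :
    g ⬝ᵥ cycleChain n *ᵥ g = (∑ x, g x ^ 2) / 2 + (∑ x, g x * g (x + 1)) / 2 := by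
  simp only [dotProduct, cycleChain_mulVec_apply, mul_add, sum_add_distrib, mul_div_assoc',
    ← sum_div, sum_mul_comp_sub, sq]
  ring

theorem cycleChain_mulVec_dotProduct_self :
    (cycleChain n *ᵥ g) ⬝ᵥ (cycleChain n *ᵥ g) =
      3 / 8 * ∑ x, g x ^ 2 + (∑ x, g x * g (x + 1)) / 2 + (∑ x, g x * g (x + 2)) / 8 := by
  have hsq (a : ZMod n) : ∑ x, g (x + a) ^ 2 = ∑ x, g x ^ 2 := sum_comp_add_right (g · ^ 2) a
  have hgap : ∑ x, g (x + 1) * g (x - 1) = ∑ x, g x * g (x + 2) := by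
    rw [← sum_comp_add_right _ 1]
    simp only [add_sub_cancel_right, add_assoc, one_add_one_eq_two, mul_comm]
  have hexp : ∀ x, (cycleChain n *ᵥ g) x * (cycleChain n *ᵥ g) x =
      g x ^ 2 / 4 + g (x + 1) ^ 2 / 16 + g (x + -1) ^ 2 / 16 + g x * g (x + 1) / 4
        + g x * g (x - 1) / 4 + g (x + 1) * g (x - 1) / 8 := by
    intro x
    rw [cycleChain_mulVec_apply, ← sub_eq_add_neg]
    ring
  simp only [dotProduct, hexp, sum_add_distrib, ← sum_div, hsq, sum_mul_comp_sub, hgap]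
  ring

theorem dotProduct_cycleChain_mulVec_nonneg : 0 ≤ g ⬝ᵥ cycleChain n *ᵥ g := by
  have := sum_sq_add_comp_add g 1
  have : 0 ≤ ∑ x, (g x + g (x + 1)) ^ 2 := sum_nonneg fun x _ => sq_nonneg _
  rw [dotProduct_cycleChain_mulVec]
  linarith

theorem dotProduct_self_sub_dotProduct_cycleChain_mulVec :
    g ⬝ᵥ g - g ⬝ᵥ cycleChain n *ᵥ g = (∑ x, (g x - g (x + 1)) ^ 2) / 4 := by
  rw [dotProduct_self_eq_sum_sq, dotProduct_cycleChain_mulVec, sum_sq_sub_comp_add]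
  ring

theorem dotProduct_cycleChain_mulVec_le : g ⬝ᵥ cycleChain n *ᵥ g ≤ g ⬝ᵥ g := by
  have := dotProduct_self_sub_dotProduct_cycleChain_mulVec g
  have : 0 ≤ ∑ x, (g x - g (x + 1)) ^ 2 := sum_nonneg fun x _ => sq_nonneg _
  linarith

theorem cycleChain_mulVec_dotProduct_self_le :
    (cycleChain n *ᵥ g) ⬝ᵥ (cycleChain n *ᵥ g) ≤ g ⬝ᵥ cycleChain n *ᵥ g := by
  have := sum_sq_sub_comp_add g 2
  have : 0 ≤ ∑ x, (g x - g (x + 2)) ^ 2 := sum_nonneg fun x _ => sq_nonneg _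
  rw [cycleChain_mulVec_dotProduct_self, dotProduct_cycleChain_mulVec]
  linarith

theorem Function.Antiperiodic.dotProduct_self_le_cycleChain {g : ZMod n → ℝ} {i : ℕ}
    (hg : Function.Antiperiodic g (i : ZMod n)) :
    g ⬝ᵥ g ≤ (i : ℝ) ^ 2 * (g ⬝ᵥ g - g ⬝ᵥ cycleChain n *ᵥ g) := by
  rw [← nsmul_one] at hg
  rw [dotProduct_self_sub_dotProduct_cycleChain_mulVec, dotProduct_self_eq_sum_sq]
  linarith [hg.sum_sq_le]

end CycleChain

section CycleF

variable {n i : ℕ}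

theorem cycleF_sub_half_sq (x : ZMod n) : (cycleF n i x - 1 / 2) ^ 2 = 1 / 4 := by
  unfold cycleF
  split_ifs <;> norm_num

variable [NeZero n]

theorem cycleF_add_natCast (hdvd : 2 * i ∣ n) (x : ZMod n) :
    cycleF n i (x + i) = 1 - cycleF n i x := by
  have hi : 0 < i := Nat.pos_of_ne_zero fun h => NeZero.ne n (by simpa [h] using hdvd)
  have hin : i < n := by have := Nat.le_of_dvd (NeZero.pos n) hdvd; omega
  have hr : x.val % (2 * i) < 2 * i := Nat.mod_lt _ (by omega)
  have hval : (x + i).val % (2 * i) = (x.val + i) % (2 * i) := by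
    rw [ZMod.val_add, ZMod.val_natCast, Nat.mod_eq_of_lt hin, Nat.mod_mod_of_dvd _ hdvd]
  simp only [cycleF, hval, Nat.add_mod_eq_ite, Nat.mod_eq_of_lt (by omega : i < 2 * i)]
  split_ifs <;> norm_num <;> omega

theorem antiperiodic_cycleF_sub_half (hdvd : 2 * i ∣ n) :
    Function.Antiperiodic (fun x => cycleF n i x - 1 / 2) (i : ZMod n) := fun x => by
  simp only [cycleF_add_natCast hdvd]
  ring

theorem cycleF_stMean (hdvd : 2 * i ∣ n) :
    stMean (fun _ : ZMod n => (1 : ℝ) / n) (cycleF n i) = 1 / 2 := by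
  have hsum := (antiperiodic_cycleF_sub_half hdvd).sum_eq_zero
  rw [sum_sub_distrib, sum_const, card_univ, ZMod.card, nsmul_eq_mul] at hsum
  rw [stMean, ← mul_sum]
  field_simp [NeZero.ne n]
  linarith

theorem cycleF_stVar (hdvd : 2 * i ∣ n) :
    stVar (fun _ : ZMod n => (1 : ℝ) / n) (cycleF n i) = 1 / 4 := by
  simp only [stVar, cycleF_stMean hdvd, cycleF_sub_half_sq, sum_const, card_univ, ZMod.card,
    nsmul_eq_mul]
  field_simp [NeZero.ne n]

theorem autocov_cycleF (hdvd : 2 * i ∣ n) (t : ℕ) :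
    autocov (cycleChain n) (fun _ => (1 : ℝ) / n) (cycleF n i) t =
      ((fun x => cycleF n i x - 1 / 2) ⬝ᵥ cycleChain n ^ t *ᵥ fun x => cycleF n i x - 1 / 2) /
        n := by
  rw [autocov_eq_dotProduct, cycleF_stMean hdvd]
  simp only [dotProduct, Pi.mul_apply, sum_div]
  exact sum_congr rfl fun x _ => by ring

theorem autocov_cycleF_nonneg (hdvd : 2 * i ∣ n) (t : ℕ) :
    0 ≤ autocov (cycleChain n) (fun _ => (1 : ℝ) / n) (cycleF n i) t := by
  rw [autocov_cycleF hdvd]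
  exact div_nonneg (dotProduct_pow_mulVec_nonneg cycleChain_transpose
    dotProduct_cycleChain_mulVec_nonneg _ t) (Nat.cast_nonneg n)

theorem sum_autocov_cycleF_le (hdvd : 2 * i ∣ n) (m : ℕ) :
    ∑ t ∈ range m, autocov (cycleChain n) (fun _ => (1 : ℝ) / n) (cycleF n i) t ≤
      (i : ℝ) ^ 2 / 2 := by
  set g : ZMod n → ℝ := fun x => cycleF n i x - 1 / 2
  have hg : g ⬝ᵥ g = n / 4 := by
    simp only [dotProduct_self_eq_sum_sq, g, cycleF_sub_half_sq, sum_const, card_univ, ZMod.card,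
      nsmul_eq_mul]
    ring
  have hpoincare : ∀ s, g ⬝ᵥ cycleChain n ^ (2 * s) *ᵥ g ≤
      (i : ℝ) ^ 2 * (g ⬝ᵥ cycleChain n ^ (2 * s) *ᵥ g - g ⬝ᵥ cycleChain n ^ (2 * s + 1) *ᵥ g) := by
    intro s
    rw [dotProduct_pow_two_mul_mulVec cycleChain_transpose,
      dotProduct_pow_two_mul_add_one_mulVec cycleChain_transpose]
    exact ((antiperiodic_cycleF_sub_half hdvd).cycleChain_pow_mulVec s).dotProduct_self_le_cycleChain
  have hsum := sum_range_le_of_antitone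
    (antitone_dotProduct_pow_mulVec cycleChain_transpose dotProduct_cycleChain_mulVec_le
      cycleChain_mulVec_dotProduct_self_le g)
    (dotProduct_pow_mulVec_nonneg cycleChain_transpose dotProduct_cycleChain_mulVec_nonneg g)
    (sq_nonneg (i : ℝ)) hpoincare m
  simp only [autocov_cycleF hdvd, ← sum_div, pow_zero, one_mulVec, hg] at hsum ⊢
  rw [div_le_iff₀ (by exact_mod_cast NeZero.pos n)]
  linarith

end CycleF

/-- On the lazy cycle walk with uniform stationary distribution,
each `f_i` (for `1 ≤ i ≤ n/2` with `2i ∣ n`) has stationary mean `1/2` and stationary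
variance `1/4`, and there is a universal constant `c > 0` such that the trace variance
satisfies `v_T(f_i) ≤ c · i² / T` for every trace length `T ≥ 1`. -/
theorem cycle_mean_var_and_traceVar_upper :
    (∀ (n : ℕ) [NeZero n] (i : ℕ), 1 ≤ i → i ≤ n / 2 → 2 * i ∣ n →
        stMean (fun _ : ZMod n => (1 : ℝ) / n) (cycleF n i) = 1 / 2 ∧
          stVar (fun _ : ZMod n => (1 : ℝ) / n) (cycleF n i) = 1 / 4) ∧
      ∃ c : ℝ, 0 < c ∧
        ∀ (n : ℕ) [NeZero n] (i : ℕ), 1 ≤ i → i ≤ n / 2 → 2 * i ∣ n →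
          ∀ T : ℕ, 1 ≤ T →
            traceVar (cycleChain n) (fun _ : ZMod n => (1 : ℝ) / n) (cycleF n i) T ≤
              c * (i : ℝ) ^ 2 / (T : ℝ) := by
  refine ⟨fun n _ i _ _ hdvd => ⟨cycleF_stMean hdvd, cycleF_stVar hdvd⟩, 1, one_pos, ?_⟩
  intro n _ i _ _ hdvd T hT
  calc traceVar (cycleChain n) (fun _ : ZMod n => (1 : ℝ) / n) (cycleF n i) T
      ≤ 2 * ((i : ℝ) ^ 2 / 2) / T :=
        traceVar_le_of_autocov (cycleChain_mulVec_const 1) (const_vecMul_cycleChain _)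
          (autocov_cycleF_nonneg hdvd) (sum_autocov_cycleF_le hdvd) hT
    _ = 1 * (i : ℝ) ^ 2 / T := by ring
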